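/- Let p be a prime and 1 ≤ b ≤ a integers with ν_p(a-b) = 0 and {ν_p(a), ν_p(b)} = {0, k}. Then the p-adic limit of C(a·p^e, b·p^e) as e → ∞ exists and equals p^(ν_p(C(a,b))) · (-1)^(p·c·k) · z_a/(z_b·z_{a-b}), where c = a if ν_p(a)=k and c = b if ν_p(b)=k. -/

import Mathlib

/-- The unit part of `n` with respect to `p`: `n / p^(ν_p(n))`. -/
def unitPart (p n : ℕ) : ℕ := n / p ^ (padicValNat p n)

/-- `IsZ p n z` says that `z` is the p-adic limit of `(-1)^(p·u(n)·e) · u((u(n)·p^e)!)`. -/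
def IsZ (p : ℕ) [Fact p.Prime] (n : ℕ) (z : ℤ_[p]) : Prop :=
  Filter.Tendsto
    (fun e : ℕ => ((-1 : ℤ_[p]) ^ (p * unitPart p n * e) *
      (unitPart p (Nat.factorial (unitPart p n * p ^ e)) : ℤ_[p])))
    Filter.atTop (nhds z)

/-!
Since `n * p ^ e = u(n) * p ^ (e + ν_p n)` and `p * u(n) ≡ p * n (mod 2)`, shifting the index turns
the sequence defining `z_n` into `(-1) ^ (p n e) · u((n p^e)!)`, up to the constant sign
`(-1) ^ (p n ν_p n)`. Splitting `(a p^e)! = C(a p^e, b p^e) · (b p^e)! · ((a - b) p^e)!` into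
`p`-powers and unit parts, and using Legendre's `ν_p((p m)!) = ν_p(m!) + m` to see that
`ν_p C(a p^e, b p^e) = ν_p C(a, b)` for every `e`, gives
`C(a p^e, b p^e) · u((b p^e)!) · u(((a - b) p^e)!) = p ^ ν_p C(a, b) · u((a p^e)!)`.
The unit-part sequences converge to `p`-adic units, so the binomial coefficients converge, and the
signs collect to `(-1) ^ (p (a ν_p a + b ν_p b)) = (-1) ^ (p c k)`.
-/

open Filter Topology Nat

theorem pow_padicValNat_mul_unitPart (p n : ℕ) : p ^ padicValNat p n * unitPart p n = n :=
  Nat.mul_div_cancel' pow_padicValNat_dvd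

theorem neg_one_pow_mul_unitPart {R : Type*} [Monoid R] [HasDistribNeg R] (p n t : ℕ) :
    (-1 : R) ^ (p * unitPart p n * t) = (-1) ^ (p * n * t) := by
  have hn : p * n * t = p ^ padicValNat p n * (p * unitPart p n * t) := by
    conv_lhs => rw [← pow_padicValNat_mul_unitPart p n]
    ring
  rw [hn]
  rcases Nat.even_or_odd (p * unitPart p n * t) with h | h
  · rw [h.neg_one_pow, (h.mul_left _).neg_one_pow]
  · have hp : Odd p := (Nat.odd_mul.mp (Nat.odd_mul.mp h).1).1
    rw [h.neg_one_pow, (hp.pow.mul h).neg_one_pow]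

section Prime

variable (p : ℕ) [hp : Fact p.Prime]

theorem unitPart_eq_ordCompl (n : ℕ) : unitPart p n = ordCompl[p] n := by
  rw [unitPart, Nat.factorization_def n hp.out]

theorem unitPart_mul (m n : ℕ) : unitPart p (m * n) = unitPart p m * unitPart p n := by
  simp only [unitPart_eq_ordCompl, Nat.ordCompl_mul]

theorem not_dvd_unitPart {n : ℕ} (hn : n ≠ 0) : ¬ p ∣ unitPart p n := by
  rw [unitPart_eq_ordCompl]
  exact Nat.not_dvd_ordCompl hp.out hn

theorem padicValNat_choose_add_factorial_add_factorial {m n : ℕ} (h : m ≤ n) :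
    padicValNat p (n.choose m) + padicValNat p m ! + padicValNat p (n - m)! =
      padicValNat p n ! := by
  rw [← padicValNat.mul (Nat.choose_pos h).ne' m.factorial_ne_zero,
    ← padicValNat.mul (Nat.mul_ne_zero (Nat.choose_pos h).ne' m.factorial_ne_zero)
      (n - m).factorial_ne_zero,
    Nat.choose_mul_factorial_mul_factorial h]

theorem padicValNat_choose_mul_left {m n : ℕ} (h : m ≤ n) :
    padicValNat p ((p * n).choose (p * m)) = padicValNat p (n.choose m) := by
  have hpm := padicValNat_choose_add_factorial_add_factorial p (Nat.mul_le_mul_left p h)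
  have hm := padicValNat_choose_add_factorial_add_factorial p h
  rw [← Nat.mul_sub, padicValNat_factorial_mul, padicValNat_factorial_mul,
    padicValNat_factorial_mul] at hpm
  omega

theorem padicValNat_choose_mul_pow {m n : ℕ} (h : m ≤ n) (e : ℕ) :
    padicValNat p ((n * p ^ e).choose (m * p ^ e)) = padicValNat p (n.choose m) := by
  induction e with
  | zero => simp
  | succ e ih =>
    rw [pow_succ', mul_left_comm n, mul_left_comm m,
      padicValNat_choose_mul_left p (Nat.mul_le_mul_right _ h), ih]

theorem choose_mul_unitPart_factorial_mul_unitPart_factorial {m n : ℕ} (h : m ≤ n) :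
    n.choose m * unitPart p m ! * unitPart p (n - m)! =
      p ^ padicValNat p (n.choose m) * unitPart p n ! := by
  conv_lhs => rw [← pow_padicValNat_mul_unitPart p (n.choose m)]
  rw [← Nat.choose_mul_factorial_mul_factorial h, unitPart_mul, unitPart_mul]
  ring

end Prime

theorem tendsto_of_tendsto_mul_of_isUnit {R ι : Type*} [NormedRing R] [HasSummableGeomSeries R]
    {l : Filter ι} {x y : ι → R} {t y₀ : R} (hxy : Tendsto (fun i => x i * y i) l (𝓝 t))
    (hy : Tendsto y l (𝓝 y₀)) (hy₀ : IsUnit y₀) :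
    Tendsto x l (𝓝 (t * Ring.inverse y₀)) := by
  have hinv : Tendsto (fun i => Ring.inverse (y i)) l (𝓝 (Ring.inverse y₀)) := by
    obtain ⟨u, rfl⟩ := hy₀
    exact (NormedRing.inverse_continuousAt u).tendsto.comp hy
  refine (hxy.mul hinv).congr' ?_
  filter_upwards [hy.eventually_mem (Units.isOpen.mem_nhds hy₀)] with i hi
  rw [mul_assoc, Ring.mul_inverse_cancel _ hi, mul_one]

theorem mul_add_mul_eq_of_pair_eq {a b c k x y : ℕ} (hxy : ({x, y} : Set ℕ) = {0, k})
    (hc : (x = k ∧ c = a) ∨ (y = k ∧ c = b)) : a * x + b * y = c * k := by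
  have h0 : (0 : ℕ) ∈ ({x, y} : Set ℕ) := hxy ▸ by simp
  have hx : x ∈ ({0, k} : Set ℕ) := hxy ▸ by simp
  have hy : y ∈ ({0, k} : Set ℕ) := hxy ▸ by simp
  simp only [Set.mem_insert_iff, Set.mem_singleton_iff] at h0 hx hy
  rcases hc with ⟨rfl, rfl⟩ | ⟨rfl, rfl⟩ <;> rcases h0 with rfl | rfl <;> simp_all

/-- Normalised form of the sequence defining `z_n`: it is indexed by `n * p ^ e` rather than
`unitPart p n * p ^ e`, so that the sequences for `a`, `b` and `a - b` run in step. -/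
noncomputable def zApprox (p : ℕ) [Fact p.Prime] (n e : ℕ) : ℤ_[p] :=
  (-1) ^ (p * n * e) * (unitPart p (n * p ^ e)! : ℤ_[p])

section PadicInt

variable {p : ℕ} [hp : Fact p.Prime]

theorem norm_neg_one_pow_mul_unitPart_factorial (t m : ℕ) :
    ‖(-1 : ℤ_[p]) ^ t * (unitPart p m ! : ℤ_[p])‖ = 1 := by
  rw [norm_mul, norm_pow, norm_neg, norm_one, one_pow, one_mul, PadicInt.norm_natCast_eq_one_iff,
    hp.out.coprime_iff_not_dvd]
  exact not_dvd_unitPart p m.factorial_ne_zero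

theorem IsZ.isUnit {n : ℕ} {z : ℤ_[p]} (hz : IsZ p n z) : IsUnit z := by
  rw [PadicInt.isUnit_iff]
  refine tendsto_nhds_unique hz.norm ?_
  simp only [norm_neg_one_pow_mul_unitPart_factorial, tendsto_const_nhds]

theorem IsZ.tendsto_zApprox {n : ℕ} {z : ℤ_[p]} (hz : IsZ p n z) :
    Tendsto (zApprox p n) atTop (𝓝 ((-1) ^ (p * n * padicValNat p n) * z)) := by
  set v := padicValNat p n
  refine ((hz.comp (tendsto_add_atTop_nat v)).const_mul ((-1 : ℤ_[p]) ^ (p * n * v))).congr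
    fun e => ?_
  have hshift : unitPart p n * p ^ (e + v) = n * p ^ e := by
    conv_rhs => rw [← pow_padicValNat_mul_unitPart p n]
    ring
  have hsq : ((-1 : ℤ_[p]) ^ (p * n * v)) * (-1) ^ (p * n * v) = 1 := by
    rw [← mul_pow, neg_one_mul, neg_neg, one_pow]
  simp only [Function.comp_apply, zApprox, neg_one_pow_mul_unitPart]
  rw [hshift, mul_add, pow_add]
  linear_combination (-1 : ℤ_[p]) ^ (p * n * e) * (unitPart p (n * p ^ e)! : ℤ_[p]) * hsq

theorem choose_mul_zApprox_mul_zApprox {m n : ℕ} (h : m ≤ n) (e : ℕ) :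
    ((n * p ^ e).choose (m * p ^ e) : ℤ_[p]) * (zApprox p m e * zApprox p (n - m) e) =
      p ^ padicValNat p (n.choose m) * zApprox p n e := by
  have key := choose_mul_unitPart_factorial_mul_unitPart_factorial p
    (Nat.mul_le_mul_right (p ^ e) h)
  rw [← Nat.sub_mul, padicValNat_choose_mul_pow p h] at key
  have hsign : p * m * e + p * (n - m) * e = p * n * e := by
    rw [← add_mul, ← mul_add, Nat.add_sub_cancel' h]
  have key' := congrArg (Nat.cast : ℕ → ℤ_[p]) key
  push_cast at key'
  simp only [zApprox, ← hsign, pow_add]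
  linear_combination (-1 : ℤ_[p]) ^ (p * m * e) * (-1) ^ (p * (n - m) * e) * key'

end PadicInt

theorem stmt8_general (p : ℕ) [Fact p.Prime] (a b k c : ℕ) (hba : b ≤ a)
    (hab : padicValNat p (a - b) = 0)
    (hk : ({padicValNat p a, padicValNat p b} : Set ℕ) = {0, k})
    (hc : (padicValNat p a = k ∧ c = a) ∨ (padicValNat p b = k ∧ c = b))
    (za zb zab : ℤ_[p]) (hza : IsZ p a za) (hzb : IsZ p b zb) (hzab : IsZ p (a - b) zab) :
    ∃ L : ℤ_[p],
      Filter.Tendsto (fun e : ℕ => (((a * p ^ e).choose (b * p ^ e) : ℕ) : ℤ_[p]))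
        Filter.atTop (nhds L) ∧
      L * (zb * zab) =
        (p : ℤ_[p]) ^ (padicValNat p (a.choose b)) * (-1 : ℤ_[p]) ^ (p * c * k) * za := by
  set σb : ℤ_[p] := (-1) ^ (p * b * padicValNat p b)
  have hy := hzb.tendsto_zApprox.mul hzab.tendsto_zApprox
  rw [hab, mul_zero, pow_zero, one_mul] at hy
  have hxy : Tendsto (fun e => ((a * p ^ e).choose (b * p ^ e) : ℤ_[p]) *
      (zApprox p b e * zApprox p (a - b) e)) atTop
      (𝓝 (p ^ padicValNat p (a.choose b) * ((-1) ^ (p * a * padicValNat p a) * za))) := by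
    simp only [choose_mul_zApprox_mul_zApprox hba]
    exact hza.tendsto_zApprox.const_mul _
  have hunit : IsUnit (σb * zb * zab) :=
    ((isUnit_neg_one.pow _).mul hzb.isUnit).mul hzab.isUnit
  refine ⟨_, tendsto_of_tendsto_mul_of_isUnit hxy hy hunit, ?_⟩
  have hsign : p * c * k = p * a * padicValNat p a + p * b * padicValNat p b := by
    rw [mul_assoc, ← mul_add_mul_eq_of_pair_eq hk hc]
    ring
  have hsq : σb * σb = 1 := by rw [← mul_pow, neg_one_mul, neg_neg, one_pow]
  have hinv := Ring.inverse_mul_cancel _ hunit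
  rw [hsign, pow_add]
  set T : ℤ_[p] := p ^ padicValNat p (a.choose b) * ((-1) ^ (p * a * padicValNat p a) * za)
  linear_combination T * σb * hinv - T * Ring.inverse (σb * zb * zab) * zb * zab * hsq

theorem stmt8 (p : ℕ) [Fact p.Prime] (a b k c : ℕ) (hb : 1 ≤ b) (hba : b ≤ a)
    (hab : padicValNat p (a - b) = 0)
    (hk : ({padicValNat p a, padicValNat p b} : Set ℕ) = {0, k})
    (hc : (padicValNat p a = k ∧ c = a) ∨ (padicValNat p b = k ∧ c = b))
    (za zb zab : ℤ_[p]) (hza : IsZ p a za) (hzb : IsZ p b zb) (hzab : IsZ p (a - b) zab) :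
    ∃ L : ℤ_[p],
      Filter.Tendsto (fun e : ℕ => (((a * p ^ e).choose (b * p ^ e) : ℕ) : ℤ_[p]))
        Filter.atTop (nhds L) ∧
      L * (zb * zab) =
        (p : ℤ_[p]) ^ (padicValNat p (a.choose b)) * (-1 : ℤ_[p]) ^ (p * c * k) * za :=
  stmt8_general p a b k c hba hab hk hc za zb zab hza hzb hzab
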